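/- arXiv:2005.02043 — 4 statements merged into one kernel-verified Lean document; each statement's English description precedes it below -/
import Mathlib

section
/- Let $\lambda$ be a Young diagram containing the box $(2,2)$, and let $(X_{i,j})_{(i,j)\in\lambda}$ be i.i.d. non-negative non-deterministic random variables. Define $L_{i,j}$ as the maximum over directed lattice paths from $(1,1)$ to $(i,j)$ of the sum of weights on the path, and $L^*_{i,j}$ as the maximum over directed lattice paths from $(i,1)$ to $(1,j)$ of the sum of weights. Then the tableaux $(L_{i,j})_{(i,j)\in\lambda}$ and $(L^*_{i,j})_{(i,j)\in\lambda}$ do not have the same joint distribution. -/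
/-- Two boxes differ by a unit step. -/
def isStep (p q : ℕ × ℕ) : Prop :=
  (q.1 = p.1 + 1 ∧ q.2 = p.2) ∨ (q.1 = p.1 ∧ q.2 = p.2 + 1) ∨
  (p.1 = q.1 + 1 ∧ p.2 = q.2) ∨ (p.1 = q.1 ∧ p.2 = q.2 + 1)

/-- A directed lattice path from `(a,b)` to `(c,d)`: a sequence of boxes of minimal
length `|c-a| + |d-b|` (hence `|c-a| + |d-b| + 1` boxes) with unit steps. -/
def IsDirectedPath (a b c d : ℕ) (π : List (ℕ × ℕ)) : Prop :=
  π.length = ((c : ℤ) - a).natAbs + ((d : ℤ) - b).natAbs + 1 ∧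
  π.head? = some (a, b) ∧ π.getLast? = some (c, d) ∧
  ∀ k, (h : k + 1 < π.length) →
    isStep (π.get ⟨k, Nat.lt_of_succ_lt h⟩) (π.get ⟨k + 1, h⟩)

/-- Last passage percolation time from `(a,b)` to `(c,d)` for weights `w`. -/
noncomputable def lpp (w : ℕ × ℕ → ℝ) (a b c d : ℕ) : ℝ :=
  sSup {S : ℝ | ∃ π : List (ℕ × ℕ), IsDirectedPath a b c d π ∧ S = (π.map w).sum}

/-- A Young diagram: a finite set of boxes `(i,j)`, `i,j ≥ 1`, closed under
decreasing either coordinate. -/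
def IsYoungDiagram (Λ : Finset (ℕ × ℕ)) : Prop :=
  (∀ p ∈ Λ, 1 ≤ p.1 ∧ 1 ≤ p.2) ∧
  ∀ p ∈ Λ, ∀ i j : ℕ, 1 ≤ i → 1 ≤ j → i ≤ p.1 → j ≤ p.2 → (i, j) ∈ Λ

/-- Last passage percolation time from `(a,b)` to `(c,d)` over paths staying in `Λ`. -/
noncomputable def lppIn (Λ : Finset (ℕ × ℕ)) (w : ℕ × ℕ → ℝ) (a b c d : ℕ) : ℝ :=
  sSup {S : ℝ | ∃ π : List (ℕ × ℕ), IsDirectedPath a b c d π ∧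
    (∀ p ∈ π, p ∈ Λ) ∧ S = (π.map w).sum}

/-
Only the corner `{1,2}²` of `λ` matters. Writing `X` for the weights, the mixed second difference
`L₂₂ + L₁₁ - L₁₂ - L₂₁` of the LPP tableau equals `X₂₂ - min X₁₂ X₂₁`, while for the dual tableau
`L*₂₂ + L*₁₁ - L*₁₂ - L*₂₁ = max X₁₁ X₂₂ - X₁₁ ≥ 0`. Since the law of the weights is not a Dirac
mass, some threshold `t` has `P(X ≤ t) > 0` and `P(X > t) > 0`, so by independence the event
`X₂₂ ≤ t < min X₁₂ X₂₁` has positive probability, and on it the first difference is negative.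
-/

lemma isDirectedPath_self_iff {a b : ℕ} {π : List (ℕ × ℕ)} :
    IsDirectedPath a b a b π ↔ π = [(a, b)] := by
  constructor
  · rintro ⟨hlen, hhead, -, -⟩
    rcases π with _ | ⟨p, _ | ⟨q, t⟩⟩ <;> simp_all
  · rintro rfl
    exact ⟨by simp, rfl, rfl, fun k hk => by simp at hk⟩

lemma natAbs_dist_eq_one_of_isStep {a b c d : ℕ} (h : isStep (a, b) (c, d)) :
    ((c : ℤ) - a).natAbs + ((d : ℤ) - b).natAbs = 1 := by
  simp only [isStep] at h
  omega

lemma isDirectedPath_iff_of_isStep {a b c d : ℕ} {π : List (ℕ × ℕ)}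
    (h : isStep (a, b) (c, d)) : IsDirectedPath a b c d π ↔ π = [(a, b), (c, d)] := by
  constructor
  · rintro ⟨hlen, hhead, hlast, -⟩
    rw [natAbs_dist_eq_one_of_isStep h] at hlen
    rcases π with _ | ⟨p, _ | ⟨q, _ | ⟨r, t⟩⟩⟩ <;> simp_all
  · rintro rfl
    refine ⟨by simp [natAbs_dist_eq_one_of_isStep h], rfl, rfl, fun k hk => ?_⟩
    obtain rfl : k = 0 := by simp at hk; omega
    simpa using h

lemma isDirectedPath_iff_of_dist_two {a b c d : ℕ} {π : List (ℕ × ℕ)}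
    (hdist : ((c : ℤ) - a).natAbs + ((d : ℤ) - b).natAbs = 2) :
    IsDirectedPath a b c d π ↔
      ∃ q, (isStep (a, b) q ∧ isStep q (c, d)) ∧ π = [(a, b), q, (c, d)] := by
  constructor
  · rintro ⟨hlen, hhead, hlast, hstep⟩
    rw [hdist] at hlen
    rcases π with _ | ⟨p, _ | ⟨q, _ | ⟨r, _ | ⟨s, t⟩⟩⟩⟩ <;> simp at hlen
    simp only [List.head?_cons, Option.some.injEq, List.getLast?_cons_cons,
      List.getLast?_singleton] at hhead hlast
    subst hhead hlast
    exact ⟨q, ⟨by simpa using hstep 0 (by simp), by simpa using hstep 1 (by simp)⟩, rfl⟩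
  · rintro ⟨q, ⟨h₁, h₂⟩, rfl⟩
    refine ⟨by simp [hdist], rfl, rfl, fun k hk => ?_⟩
    obtain rfl | rfl : k = 0 ∨ k = 1 := by simp at hk; omega
    · simpa using h₁
    · simpa using h₂

section Lpp

variable (Λ : Finset (ℕ × ℕ)) (w : ℕ × ℕ → ℝ)

lemma lppIn_eq_sSup_image (a b c d : ℕ) :
    lppIn Λ w a b c d = sSup ((fun π => (π.map w).sum) ''
      {π | IsDirectedPath a b c d π ∧ ∀ p ∈ π, p ∈ Λ}) := by
  simp only [lppIn, Set.image, Set.mem_ofPred_eq, and_assoc, eq_comm]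

lemma measurable_lppIn {Ω : Type*} [MeasurableSpace Ω] (X : ℕ × ℕ → Ω → ℝ)
    (hX : ∀ p, Measurable (X p)) (a b c d : ℕ) :
    Measurable fun ω => lppIn Λ (fun q => X q ω) a b c d := by
  simp only [lppIn_eq_sSup_image]
  refine Measurable.sSup (Set.to_countable _) fun π _ => ?_
  simpa [Function.comp_def] using List.measurable_fun_sum (π.map X) fun f hf => by
    obtain ⟨p, -, rfl⟩ := List.mem_map.1 hf
    exact hX p

variable {Λ}

lemma lppIn_self {a b : ℕ} (hab : (a, b) ∈ Λ) : lppIn Λ w a b a b = w (a, b) := by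
  have hpaths : {π | IsDirectedPath a b a b π ∧ ∀ p ∈ π, p ∈ Λ} = {[(a, b)]} := by
    ext π
    simp +contextual [isDirectedPath_self_iff, hab]
  rw [lppIn_eq_sSup_image, hpaths, Set.image_singleton, csSup_singleton]
  simp

lemma lppIn_of_isStep {a b c d : ℕ} (h : isStep (a, b) (c, d)) (hab : (a, b) ∈ Λ)
    (hcd : (c, d) ∈ Λ) : lppIn Λ w a b c d = w (a, b) + w (c, d) := by
  have hpaths : {π | IsDirectedPath a b c d π ∧ ∀ p ∈ π, p ∈ Λ} = {[(a, b), (c, d)]} := by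
    ext π
    rw [Set.mem_ofPred_eq, isDirectedPath_iff_of_isStep h, Set.mem_singleton_iff]
    constructor
    · exact And.left
    · rintro rfl
      exact ⟨rfl, List.forall_mem_cons.2 ⟨hab, List.forall_mem_singleton.2 hcd⟩⟩
  rw [lppIn_eq_sSup_image, hpaths, Set.image_singleton, csSup_singleton]
  simp

lemma lppIn_of_dist_two {a b c d : ℕ} {q₁ q₂ : ℕ × ℕ}
    (hdist : ((c : ℤ) - a).natAbs + ((d : ℤ) - b).natAbs = 2)
    (hmid : ∀ q, isStep (a, b) q ∧ isStep q (c, d) ↔ q = q₁ ∨ q = q₂)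
    (hab : (a, b) ∈ Λ) (hq₁ : q₁ ∈ Λ) (hq₂ : q₂ ∈ Λ) (hcd : (c, d) ∈ Λ) :
    lppIn Λ w a b c d = w (a, b) + max (w q₁) (w q₂) + w (c, d) := by
  have hpaths : {π | IsDirectedPath a b c d π ∧ ∀ p ∈ π, p ∈ Λ} =
      {[(a, b), q₁, (c, d)], [(a, b), q₂, (c, d)]} := by
    ext π
    simp only [isDirectedPath_iff_of_dist_two hdist, Set.mem_ofPred_eq, Set.mem_insert_iff,
      Set.mem_singleton_iff]
    constructor
    · rintro ⟨⟨q, hq, rfl⟩, -⟩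
      rcases (hmid q).1 hq with rfl | rfl <;> simp
    · rintro (rfl | rfl)
      · exact ⟨⟨q₁, (hmid q₁).2 (.inl rfl), rfl⟩, by simp [hab, hq₁, hcd]⟩
      · exact ⟨⟨q₂, (hmid q₂).2 (.inr rfl), rfl⟩, by simp [hab, hq₂, hcd]⟩
  rw [lppIn_eq_sSup_image, hpaths, Set.image_pair, csSup_pair]
  simp [add_assoc, max_add_add_left, max_add_add_right]

lemma lppIn_corner_mixedDiff (h11 : (1, 1) ∈ Λ) (h12 : (1, 2) ∈ Λ) (h21 : (2, 1) ∈ Λ)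
    (h22 : (2, 2) ∈ Λ) :
    lppIn Λ w 1 1 2 2 + lppIn Λ w 1 1 1 1 - lppIn Λ w 1 1 1 2 - lppIn Λ w 1 1 2 1 =
      w (2, 2) - min (w (1, 2)) (w (2, 1)) := by
  rw [lppIn_of_dist_two w (q₁ := (1, 2)) (q₂ := (2, 1)) (by norm_num)
      (fun ⟨i, j⟩ => by simp only [isStep, Prod.mk.injEq]; omega) h11 h12 h21 h22,
    lppIn_self w h11, lppIn_of_isStep w (by simp [isStep]) h11 h12,
    lppIn_of_isStep w (by simp [isStep]) h11 h21]
  linarith [min_add_max (w (1, 2)) (w (2, 1))]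

lemma dual_lppIn_corner_mixedDiff (h11 : (1, 1) ∈ Λ) (h12 : (1, 2) ∈ Λ) (h21 : (2, 1) ∈ Λ)
    (h22 : (2, 2) ∈ Λ) :
    lppIn Λ w 2 1 1 2 + lppIn Λ w 1 1 1 1 - lppIn Λ w 1 1 1 2 - lppIn Λ w 2 1 1 1 =
      max (w (1, 1)) (w (2, 2)) - w (1, 1) := by
  rw [lppIn_of_dist_two w (q₁ := (1, 1)) (q₂ := (2, 2)) (by norm_num)
      (fun ⟨i, j⟩ => by simp only [isStep, Prod.mk.injEq]; omega) h21 h11 h22 h12,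
    lppIn_self w h11, lppIn_of_isStep w (by simp [isStep]) h11 h12,
    lppIn_of_isStep w (by simp [isStep]) h21 h11]
  ring

end Lpp

open MeasureTheory ProbabilityTheory

lemma isZeroOneMeasure_of_measure_Iic {μ : Measure ℝ} [IsProbabilityMeasure μ]
    (h : ∀ t, μ (Set.Iic t) = 0 ∨ μ (Set.Iic t) = 1) : IsZeroOneMeasure μ := by
  refine ⟨fun s hs => ?_⟩
  induction s, hs using MeasurableSpace.induction_on_inter
    (BorelSpace.measurable_eq.trans (borel_eq_generateFrom_Iic ℝ)) isPiSystem_Iic with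
  | empty => simp
  | basic _ ht => obtain ⟨t, rfl⟩ := ht; exact h t
  | compl s hs ih => rw [prob_compl_eq_zero_iff hs, prob_compl_eq_one_iff hs]; exact ih.symm
  | iUnion f _ hf ih =>
    by_cases hone : ∃ i, μ (f i) = 1
    · obtain ⟨i, hi⟩ := hone
      exact .inr (le_antisymm prob_le_one (hi ▸ measure_mono (Set.subset_iUnion f i)))
    · push Not at hone
      exact .inl (measure_iUnion_null fun i => (ih i).resolve_right (hone i))

lemma exists_measure_Iic_pos_and_measure_Ioi_pos (μ : Measure ℝ) [IsProbabilityMeasure μ]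
    (h : ∀ x, μ ≠ Measure.dirac x) : ∃ t, 0 < μ (Set.Iic t) ∧ 0 < μ (Set.Ioi t) := by
  by_contra! hcon
  have : IsZeroOneMeasure μ := isZeroOneMeasure_of_measure_Iic fun t => by
    rw [← prob_compl_eq_zero_iff measurableSet_Iic, Set.compl_Iic]
    simpa [pos_iff_ne_zero, imp_iff_not_or] using hcon t
  obtain ⟨x, hx⟩ := IsZeroOneMeasure.exists_eq_dirac (μ := μ)
  exact h x hx

lemma ProbabilityTheory.iIndepFun.measure_inter_preimage_eq_mul_three {Ω ι β : Type*}
    [MeasurableSpace Ω] [MeasurableSpace β] {P : Measure Ω} {X : ι → Ω → β}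
    (hX : iIndepFun X P) (hmeas : ∀ i, Measurable (X i)) {i j k : ι}
    (hij : i ≠ j) (hik : i ≠ k) (hjk : j ≠ k) {A B C : Set β}
    (hA : MeasurableSet A) (hB : MeasurableSet B) (hC : MeasurableSet C) :
    P (X i ⁻¹' A ∩ X j ⁻¹' B ∩ X k ⁻¹' C) = P (X i ⁻¹' A) * P (X j ⁻¹' B) * P (X k ⁻¹' C) := by
  have hpair : IndepFun (fun ω => (X i ω, X j ω)) (X k) P :=
    hX.indepFun_prodMk hmeas i j k hik hjk
  rw [← (hX.indepFun hij).measure_inter_preimage_eq_mul _ _ hA hB]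
  exact hpair.measure_inter_preimage_eq_mul _ _ (hA.prod hB) hC

lemma map_ne_map_of_nonneg_of_measure_neg_pos {Ω α : Type*} [MeasurableSpace Ω]
    [MeasurableSpace α] {P : Measure Ω} {F G : Ω → α} (hF : Measurable F) (hG : Measurable G)
    {D : α → ℝ} (hD : Measurable D) (hDG : ∀ ω, 0 ≤ D (G ω))
    (hDF : 0 < P {ω | D (F ω) < 0}) : P.map F ≠ P.map G := by
  intro hFG
  have hset : MeasurableSet {g | D g < 0} := measurableSet_lt hD measurable_const
  have hempty : G ⁻¹' {g | D g < 0} = ∅ :=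
    Set.eq_empty_of_forall_notMem fun ω hω => (hDG ω).not_gt hω
  have := congrArg (fun ν => ν {g | D g < 0}) hFG
  simp only [Measure.map_apply hF hset, Measure.map_apply hG hset, hempty, measure_empty] at this
  exact hDF.ne' this

theorem lpp_and_dual_lpp_tableaux_not_equidistributed_general
    {Ω : Type*} [MeasurableSpace Ω] (P : Measure Ω) [IsProbabilityMeasure P]
    (Λ : Finset (ℕ × ℕ)) (hΛ : IsYoungDiagram Λ) (h22 : (2, 2) ∈ Λ)
    (X : ℕ × ℕ → Ω → ℝ) (hmeas : ∀ p, Measurable (X p))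
    (hindep : iIndepFun (fun p : ↥Λ => X ↑p) P)
    (μ : Measure ℝ) (hident : ∀ p ∈ Λ, Measure.map (X p) P = μ)
    (hnondirac : ∀ x : ℝ, μ ≠ Measure.dirac x) :
    Measure.map (fun ω => fun p : ↥Λ =>
        lppIn Λ (fun q => X q ω) 1 1 (p : ℕ × ℕ).1 (p : ℕ × ℕ).2) P ≠
      Measure.map (fun ω => fun p : ↥Λ =>
        lppIn Λ (fun q => X q ω) (p : ℕ × ℕ).1 1 1 (p : ℕ × ℕ).2) P := by
  obtain ⟨h11, h12, h21⟩ : (1, 1) ∈ Λ ∧ (1, 2) ∈ Λ ∧ (2, 1) ∈ Λ :=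
    ⟨hΛ.2 _ h22 1 1 le_rfl le_rfl one_le_two one_le_two,
      hΛ.2 _ h22 1 2 le_rfl one_le_two one_le_two le_rfl,
      hΛ.2 _ h22 2 1 one_le_two le_rfl le_rfl one_le_two⟩
  have hlaw : ∀ p ∈ Λ, ∀ s, MeasurableSet s → P (X p ⁻¹' s) = μ s := fun p hp s hs => by
    rw [← hident p hp, Measure.map_apply (hmeas p) hs]
  have : IsProbabilityMeasure μ :=
    hident _ h11 ▸ Measure.isProbabilityMeasure_map (hmeas _).aemeasurable
  obtain ⟨t, hlow, hhigh⟩ := exists_measure_Iic_pos_and_measure_Ioi_pos μ hnondirac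
  have hevent :
      0 < P (X (2, 2) ⁻¹' Set.Iic t ∩ X (1, 2) ⁻¹' Set.Ioi t ∩ X (2, 1) ⁻¹' Set.Ioi t) := by
    rw [hindep.measure_inter_preimage_eq_mul_three (fun p => hmeas p)
        (i := ⟨(2, 2), h22⟩) (j := ⟨(1, 2), h12⟩) (k := ⟨(2, 1), h21⟩) (by simp) (by simp)
        (by simp) measurableSet_Iic measurableSet_Ioi measurableSet_Ioi]
    simp only [hlaw _ h22 _ measurableSet_Iic, hlaw _ h12 _ measurableSet_Ioi,
      hlaw _ h21 _ measurableSet_Ioi]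
    exact ENNReal.mul_pos (ENNReal.mul_pos hlow.ne' hhigh.ne').ne' hhigh.ne'
  refine map_ne_map_of_nonneg_of_measure_neg_pos
    (measurable_pi_lambda _ fun p => measurable_lppIn Λ X hmeas _ _ _ _)
    (measurable_pi_lambda _ fun p => measurable_lppIn Λ X hmeas _ _ _ _)
    (D := fun g => g ⟨(2, 2), h22⟩ + g ⟨(1, 1), h11⟩ - g ⟨(1, 2), h12⟩ - g ⟨(2, 1), h21⟩)
    (by fun_prop) (fun ω => ?_) (hevent.trans_le (measure_mono fun ω hω => ?_))
  · rw [dual_lppIn_corner_mixedDiff _ h11 h12 h21 h22]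
    exact sub_nonneg.2 (le_max_left _ _)
  · obtain ⟨⟨h22t, h12t⟩, h21t⟩ := hω
    simp only [Set.mem_ofPred_eq, lppIn_corner_mixedDiff _ h11 h12 h21 h22, sub_neg, lt_min_iff]
    exact ⟨lt_of_le_of_lt h22t h12t, lt_of_le_of_lt h22t h21t⟩

/-- for a Young diagram `Λ` containing the box `(2,2)` and i.i.d.
non-negative, non-deterministic weights `(X p)_{p ∈ Λ}`, the LPP tableau
`(L_{i,j})_{(i,j) ∈ Λ}` (with `L_{i,j}` the LPP time from `(1,1)` to `(i,j)`) and the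
dual LPP tableau `(L*_{i,j})_{(i,j) ∈ Λ}` (with `L*_{i,j}` the LPP time from `(i,1)` to
`(1,j)`) do not have the same joint distribution. -/
theorem lpp_and_dual_lpp_tableaux_not_equidistributed
    {Ω : Type*} [MeasurableSpace Ω] (P : Measure Ω) [IsProbabilityMeasure P]
    (Λ : Finset (ℕ × ℕ)) (hΛ : IsYoungDiagram Λ) (h22 : (2, 2) ∈ Λ)
    (X : ℕ × ℕ → Ω → ℝ) (hmeas : ∀ p, Measurable (X p))
    (hindep : iIndepFun (fun p : ↥Λ => X ↑p) P)
    (μ : Measure ℝ) (hident : ∀ p ∈ Λ, Measure.map (X p) P = μ)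
    (hnondirac : ∀ x : ℝ, μ ≠ Measure.dirac x)
    (hnonneg : ∀ p ∈ Λ, ∀ᵐ ω ∂P, 0 ≤ X p ω) :
    Measure.map (fun ω => fun p : ↥Λ =>
        lppIn Λ (fun q => X q ω) 1 1 (p : ℕ × ℕ).1 (p : ℕ × ℕ).2) P ≠
      Measure.map (fun ω => fun p : ↥Λ =>
        lppIn Λ (fun q => X q ω) (p : ℕ × ℕ).1 1 1 (p : ℕ × ℕ).2) P :=
  lpp_and_dual_lpp_tableaux_not_equidistributed_general P Λ hΛ h22 X hmeas hindep μ hident hnondirac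
end

section
/- Take the square shape $\lambda = (2,2)$ and let $X_{1,1}, X_{1,2}, X_{2,1}, X_{2,2}$ be i.i.d. uniform on $\{0,1\}$. With $L$ the LPP tableau and $L^*$ the dual LPP tableau, one has $\mathbb{P}(L_{1,2}=2, L_{2,2}=3, L_{2,1}=1) = 2^{-4}$ whereas $\mathbb{P}(L^*_{1,2}=2, L^*_{2,2}=3, L^*_{2,1}=1) = 0$. In particular, the restrictions of $L$ and $L^*$ to the border strip $\{(2,1),(2,2),(1,2)\}$ are not equal in distribution. -/
open MeasureTheory ProbabilityTheory

open scoped ENNReal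

/-!
All weights are a.s. at most `1`. Under that constraint `L_{1,2} = 2` forces
`X_{1,1} = X_{1,2} = 1`, then `L_{2,1} = 1` forces `X_{2,1} = 0` and `L_{2,2} = 3` forces
`X_{2,2} = 1`: the first event is a single configuration, of probability `2⁻⁴` by independence.
In the same configuration `L*_{2,2} = 0 + max 1 X_{2,2} + 1 = 2`, so the dual event is null.
Evaluating the two laws at the point `(1, 3, 2)` then separates them.
-/

noncomputable def bernoulliHalf : Measure ℝ :=
  (2⁻¹ : ℝ≥0∞) • Measure.dirac 0 + (2⁻¹ : ℝ≥0∞) • Measure.dirac 1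

lemma bernoulliHalf_singleton {v : ℝ} (hv : v = 0 ∨ v = 1) : bernoulliHalf {v} = 2⁻¹ := by
  rcases hv with rfl | rfl <;> simp [bernoulliHalf]

lemma bernoulliHalf_ne_zero : bernoulliHalf ≠ 0 := by
  intro h
  have := congrArg (fun μ : Measure ℝ => μ Set.univ) h
  simp [bernoulliHalf, ENNReal.inv_two_add_inv_two] at this

lemma ae_le_one_bernoulliHalf : ∀ᵐ y ∂bernoulliHalf, y ≤ 1 := by
  simp [bernoulliHalf, ae_add_measure_iff]

section

variable {Ω ι : Type*} [MeasurableSpace Ω] {P : Measure Ω}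

lemma aemeasurable_of_map_eq_bernoulliHalf {Y : Ω → ℝ} (h : P.map Y = bernoulliHalf) :
    AEMeasurable Y P :=
  .of_map_ne_zero (h ▸ bernoulliHalf_ne_zero)

lemma ae_le_one_of_map_eq_bernoulliHalf {Y : Ω → ℝ} (h : P.map Y = bernoulliHalf) :
    ∀ᵐ ω ∂P, Y ω ≤ 1 :=
  ae_of_ae_map (aemeasurable_of_map_eq_bernoulliHalf h) (h ▸ ae_le_one_bernoulliHalf)

lemma measure_forall_eq_of_iIndepFun_bernoulliHalf [Fintype ι] {X : ι → Ω → ℝ}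
    (hindep : iIndepFun X P) (hlaw : ∀ i, P.map (X i) = bernoulliHalf) {v : ι → ℝ}
    (hv : ∀ i, v i = 0 ∨ v i = 1) :
    P {ω | ∀ i, X i ω = v i} = ((2 : ℝ≥0∞) ^ Fintype.card ι)⁻¹ := by
  have hpoint (i : ι) : P (X i ⁻¹' {v i}) = 2⁻¹ := by
    rw [← Measure.map_apply_of_aemeasurable (aemeasurable_of_map_eq_bernoulliHalf (hlaw i))
      (measurableSet_singleton _), hlaw i, bernoulliHalf_singleton (hv i)]
  have hset : {ω | ∀ i, X i ω = v i} = ⋂ i, X i ⁻¹' {v i} := by ext; simp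
  rw [hset, hindep.meas_iInter fun i => ⟨{v i}, measurableSet_singleton _, rfl⟩]
  simp [hpoint, ENNReal.inv_pow]

lemma map_ne_map_of_measure_preimage_ne {α : Type*} [MeasurableSpace α] {f g : Ω → α}
    (hf : AEMeasurable f P) (hg : AEMeasurable g P) {s : Set α} (hs : MeasurableSet s)
    (h : P (f ⁻¹' s) ≠ P (g ⁻¹' s)) : P.map f ≠ P.map g :=
  fun heq => h <| by
    rw [← Measure.map_apply_of_aemeasurable hf hs, heq,
      Measure.map_apply_of_aemeasurable hg hs]

end

lemma lpp_corner_iff {a b c d : ℝ} (ha : a ≤ 1) (hb : b ≤ 1) :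
    a + b = 2 ∧ a + max b c + d = 3 ∧ a + c = 1 ↔ a = 1 ∧ b = 1 ∧ c = 0 ∧ d = 1 := by
  constructor
  · rintro ⟨hab, hmax, hac⟩
    obtain ⟨rfl, rfl⟩ : a = 1 ∧ b = 1 := ⟨by linarith, by linarith⟩
    obtain rfl : c = 0 := by linarith
    norm_num at hmax
    exact ⟨rfl, rfl, rfl, by linarith⟩
  · rintro ⟨rfl, rfl, rfl, rfl⟩
    norm_num

lemma not_dual_lpp_corner {a b c d : ℝ} (ha : a ≤ 1) (hb : b ≤ 1) (hd : d ≤ 1) :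
    ¬ (a + b = 2 ∧ c + max a d + b = 3 ∧ a + c = 1) := by
  rintro ⟨hab, hmax, hac⟩
  have : max a d ≤ 1 := max_le ha hd
  linarith

theorem square_bernoulli_lpp_counterexample_general
    {Ω : Type*} [MeasurableSpace Ω] (P : Measure Ω)
    (X : Fin 4 → Ω → ℝ)
    (hindep : iIndepFun X P)
    (hunif : ∀ i, Measure.map (X i) P
      = (2⁻¹ : ℝ≥0∞) • Measure.dirac (0 : ℝ) + (2⁻¹ : ℝ≥0∞) • Measure.dirac (1 : ℝ)) :
    P {ω | X 0 ω + X 1 ω = 2 ∧ X 0 ω + max (X 1 ω) (X 2 ω) + X 3 ω = 3 ∧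
        X 0 ω + X 2 ω = 1} = ((2 : ℝ≥0∞) ^ 4)⁻¹ ∧
    P {ω | X 0 ω + X 1 ω = 2 ∧ X 2 ω + max (X 0 ω) (X 3 ω) + X 1 ω = 3 ∧
        X 0 ω + X 2 ω = 1} = 0 ∧
    Measure.map (fun ω =>
        (X 0 ω + X 2 ω, X 0 ω + max (X 1 ω) (X 2 ω) + X 3 ω, X 0 ω + X 1 ω)) P ≠
      Measure.map (fun ω =>
        (X 0 ω + X 2 ω, X 2 ω + max (X 0 ω) (X 3 ω) + X 1 ω, X 0 ω + X 1 ω)) P := by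
  have haem (i : Fin 4) : AEMeasurable (X i) P :=
    aemeasurable_of_map_eq_bernoulliHalf (hunif i)
  have hle : ∀ᵐ ω ∂P, ∀ i, X i ω ≤ 1 :=
    ae_all_iff.2 fun i => ae_le_one_of_map_eq_bernoulliHalf (hunif i)
  have hL : P {ω | X 0 ω + X 1 ω = 2 ∧ X 0 ω + max (X 1 ω) (X 2 ω) + X 3 ω = 3 ∧
      X 0 ω + X 2 ω = 1} = ((2 : ℝ≥0∞) ^ 4)⁻¹ := by
    have hbits := measure_forall_eq_of_iIndepFun_bernoulliHalf hindep hunif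
      (v := ![1, 1, 0, 1]) (by simp [Fin.forall_fin_succ])
    rw [Fintype.card_fin] at hbits
    rw [← hbits]
    refine measure_congr (Filter.eventuallyEq_set.2 ?_)
    filter_upwards [hle] with ω h
    simpa [Fin.forall_fin_succ, and_assoc] using
      lpp_corner_iff (c := X 2 ω) (d := X 3 ω) (h 0) (h 1)
  have hLdual : P {ω | X 0 ω + X 1 ω = 2 ∧ X 2 ω + max (X 0 ω) (X 3 ω) + X 1 ω = 3 ∧
      X 0 ω + X 2 ω = 1} = 0 := by
    rw [measure_eq_zero_iff_ae_notMem]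
    filter_upwards [hle] with ω h
    exact not_dual_lpp_corner (h 0) (h 1) (h 3)
  refine ⟨hL, hLdual, map_ne_map_of_measure_preimage_ne (by fun_prop) (by fun_prop)
    (measurableSet_singleton (1, 3, 2)) ?_⟩
  convert (hL.trans_ne (by simp)).trans_eq hLdual.symm using 2 <;>
  · ext ω
    simp only [Set.mem_preimage, Set.mem_singleton_iff, Prod.mk.injEq, Set.mem_ofPred_eq]
    tauto

/-- on the 2×2 square with i.i.d. weights uniform on `{0,1}`
(`X 0 = X_{1,1}`, `X 1 = X_{1,2}`, `X 2 = X_{2,1}`, `X 3 = X_{2,2}`), writing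
`L_{1,2} = X_{1,1}+X_{1,2}`, `L_{2,1} = X_{1,1}+X_{2,1}`,
`L_{2,2} = X_{1,1} + max(X_{1,2},X_{2,1}) + X_{2,2}`, and dually
`L*_{2,2} = X_{2,1} + max(X_{1,1},X_{2,2}) + X_{1,2}`, we have
`P(L_{1,2}=2, L_{2,2}=3, L_{2,1}=1) = 2⁻⁴` while the dual probability is `0`;
in particular the border-strip restrictions of `L` and `L*` differ in distribution. -/
theorem square_bernoulli_lpp_counterexample
    {Ω : Type*} [MeasurableSpace Ω] (P : Measure Ω) [IsProbabilityMeasure P]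
    (X : Fin 4 → Ω → ℝ) (hmeas : ∀ i, Measurable (X i))
    (hindep : iIndepFun X P)
    (hunif : ∀ i, Measure.map (X i) P
      = (2⁻¹ : ℝ≥0∞) • Measure.dirac (0 : ℝ) + (2⁻¹ : ℝ≥0∞) • Measure.dirac (1 : ℝ)) :
    P {ω | X 0 ω + X 1 ω = 2 ∧ X 0 ω + max (X 1 ω) (X 2 ω) + X 3 ω = 3 ∧
        X 0 ω + X 2 ω = 1} = ((2 : ℝ≥0∞) ^ 4)⁻¹ ∧
    P {ω | X 0 ω + X 1 ω = 2 ∧ X 2 ω + max (X 0 ω) (X 3 ω) + X 1 ω = 3 ∧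
        X 0 ω + X 2 ω = 1} = 0 ∧
    Measure.map (fun ω =>
        (X 0 ω + X 2 ω, X 0 ω + max (X 1 ω) (X 2 ω) + X 3 ω, X 0 ω + X 1 ω)) P ≠
      Measure.map (fun ω =>
        (X 0 ω + X 2 ω, X 2 ω + max (X 0 ω) (X 3 ω) + X 1 ω, X 0 ω + X 1 ω)) P :=
  square_bernoulli_lpp_counterexample_general P X hindep hunif
end

section
/- Let $t$ be a standard Young tableau of staircase shape $\delta_n = (n-1, n-2, \ldots, 1)$ and let $s = \mathrm{EG}(t)$ be its image under the Edelman–Greene correspondence. Then $\mathrm{last}_s(k) = t_{n-k,k}$ for all $1 \le k \le n-1$; that is, the index of the last occurrence of the letter $k$ in the sorting network $s$ equals the entry of $t$ in the corner box $(n-k, k)$. Consequently, the ordering permutations coincide: $\pi_s = \sigma_t$. -/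
/-- The staircase shape `δ_n = (n-1, n-2, …, 1)`: boxes `(i,j)` with `i,j ≥ 1` and
`i + j ≤ n`. -/
def staircase (n : ℕ) : Finset (ℕ × ℕ) :=
  (Finset.Icc (1, 1) (n, n)).filter fun p => p.1 + p.2 ≤ n

/-- A standard Young tableau of staircase shape `δ_n`, encoded as a function
`t : ℕ × ℕ → ℕ` which is `0` outside `δ_n`, fills the boxes of `δ_n` bijectively with
`1, …, N` (`N = n(n-1)/2`), and strictly increases along rows and columns. -/
def IsStaircaseSYT (n : ℕ) (t : ℕ × ℕ → ℕ) : Prop :=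
  (∀ p, p ∉ staircase n → t p = 0) ∧
  (∀ p ∈ staircase n, 1 ≤ t p ∧ t p ≤ n * (n - 1) / 2) ∧
  Set.InjOn t (staircase n) ∧
  (∀ v, 1 ≤ v → v ≤ n * (n - 1) / 2 → ∃ p ∈ staircase n, t p = v) ∧
  (∀ p ∈ staircase n, ∀ q ∈ staircase n, p.1 ≤ q.1 → p.2 ≤ q.2 → p ≠ q → t p < t q)

/-- The box containing the maximal entry `N = n(n-1)/2` of `t` (for an SYT there is
exactly one such box, and `Finset.sup id` extracts it). -/
def maxBox (n : ℕ) (t : ℕ × ℕ → ℕ) : ℕ × ℕ :=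
  ((staircase n).filter fun p => t p = n * (n - 1) / 2).sup id

/-- One step of the evacuation path of `t`: from a box move to the neighbour above or
to the left containing the larger entry (with the convention `t = 0` outside `δ_n`,
in particular on row/column `0`). -/
def evacStep (t : ℕ × ℕ → ℕ) (p : ℕ × ℕ) : ℕ × ℕ :=
  if t (p.1 - 1, p.2) > t (p.1, p.2 - 1) then (p.1 - 1, p.2) else (p.1, p.2 - 1)

open scoped Classical in
/-- The Schützenberger operator `Φ` on staircase tableaux: slide outward along the
evacuation path `c_1 = maxBox, c_{m+1} = evacStep (c_m)` (so `t'_{c_m} = t_{c_{m+1}}`,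
emptying the box `(1,1)`), then increment every entry of the staircase by `1`. -/
noncomputable def schutzenberger (n : ℕ) (t : ℕ × ℕ → ℕ) : ℕ × ℕ → ℕ := fun p =>
  (if ∃ m < n - 1, (evacStep t)^[m] (maxBox n t) = p then t (evacStep t p) else t p)
  + (if p ∈ staircase n then 1 else 0)

/-- `j_max(t)`: the column index of the box of `t` containing the maximal entry. -/
def jmax (n : ℕ) (t : ℕ × ℕ → ℕ) : ℕ :=
  ((staircase n).filter fun p => t p = n * (n - 1) / 2).sup fun p => p.2

/-- The Edelman–Greene word of `t`: `s_m = j_max(Φ^{N-m}(t))` for `1 ≤ m ≤ N`. -/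
noncomputable def EGword (n : ℕ) (t : ℕ × ℕ → ℕ) (m : ℕ) : ℕ :=
  jmax n ((schutzenberger n)^[n * (n - 1) / 2 - m] t)

/-!
The evacuation path of `t` starts at the box of the maximal entry `N`, which lies on the
antidiagonal `i + j = n`, and then descends one antidiagonal per step. Hence `Φ` raises every
other corner entry by exactly one, and `Φ` maps staircase tableaux to staircase tableaux. So the
corner `(n-k, k)` of `Φ^r(t)` holds `t_{n-k,k} + r` as long as this is at most `N`, and
`j_max(Φ^{N-j}(t)) = k` holds for `j = t_{n-k,k}` and for no larger `j`.
-/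

variable {n : ℕ} {t : ℕ × ℕ → ℕ} {p q : ℕ × ℕ}

lemma mem_staircase : p ∈ staircase n ↔ 1 ≤ p.1 ∧ 1 ≤ p.2 ∧ p.1 + p.2 ≤ n := by
  simp only [staircase, Finset.mem_filter, Finset.mem_Icc, Prod.le_def]
  omega

lemma corner_mem_staircase {k : ℕ} (hk1 : 1 ≤ k) (hk2 : k ≤ n - 1) :
    (n - k, k) ∈ staircase n :=
  mem_staircase.mpr ⟨by omega, hk1, by omega⟩

lemma one_le_mul_pred_div_two (hn : 2 ≤ n) : 1 ≤ n * (n - 1) / 2 := by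
  have : 2 * 1 ≤ n * (n - 1) := Nat.mul_le_mul hn (by omega)
  omega

namespace IsStaircaseSYT

lemma eq_zero (ht : IsStaircaseSYT n t) (hp : p ∉ staircase n) : t p = 0 := ht.1 p hp

lemma pos (ht : IsStaircaseSYT n t) (hp : p ∈ staircase n) : 0 < t p := (ht.2.1 p hp).1

lemma le_max (ht : IsStaircaseSYT n t) (hp : p ∈ staircase n) : t p ≤ n * (n - 1) / 2 :=
  (ht.2.1 p hp).2

lemma mem_of_pos (ht : IsStaircaseSYT n t) (hp : 0 < t p) : p ∈ staircase n := by
  by_contra h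
  rw [ht.eq_zero h] at hp
  exact hp.false

lemma eq_of_apply_eq (ht : IsStaircaseSYT n t) (hq : q ∈ staircase n) (h : t p = t q) :
    p = q :=
  ht.2.2.1 (ht.mem_of_pos (h ▸ ht.pos hq)) hq h

lemma apply_lt_of_le_of_ne (ht : IsStaircaseSYT n t) (hq : q ∈ staircase n) (hle : p ≤ q)
    (hne : p ≠ q) : t p < t q := by
  by_cases hp : p ∈ staircase n
  · exact ht.2.2.2.2 p hp q hq hle.1 hle.2 hne
  · rw [ht.eq_zero hp]
    exact ht.pos hq

lemma apply_le_of_le (ht : IsStaircaseSYT n t) (hq : q ∈ staircase n) (hle : p ≤ q) :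
    t p ≤ t q := by
  rcases eq_or_ne p q with rfl | hne
  · rfl
  · exact (ht.apply_lt_of_le_of_ne hq hle hne).le

lemma filter_apply_eq_max (ht : IsStaircaseSYT n t) (hn : 2 ≤ n) :
    (staircase n).filter (fun p => t p = n * (n - 1) / 2) = {maxBox n t} := by
  obtain ⟨p₀, hp₀, hval⟩ := ht.2.2.2.1 _ (one_le_mul_pred_div_two hn) le_rfl
  have hfilter : (staircase n).filter (fun p => t p = n * (n - 1) / 2) = {p₀} :=
    Finset.eq_singleton_iff_unique_mem.mpr ⟨Finset.mem_filter.mpr ⟨hp₀, hval⟩,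
      fun p hp => ht.eq_of_apply_eq hp₀ ((Finset.mem_filter.mp hp).2.trans hval.symm)⟩
  rw [maxBox, hfilter, Finset.sup_singleton]
  rfl

lemma maxBox_mem_filter (ht : IsStaircaseSYT n t) (hn : 2 ≤ n) :
    maxBox n t ∈ (staircase n).filter (fun p => t p = n * (n - 1) / 2) := by
  rw [ht.filter_apply_eq_max hn]
  exact Finset.mem_singleton_self _

lemma maxBox_mem (ht : IsStaircaseSYT n t) (hn : 2 ≤ n) : maxBox n t ∈ staircase n :=
  (Finset.mem_filter.mp (ht.maxBox_mem_filter hn)).1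

lemma apply_maxBox (ht : IsStaircaseSYT n t) (hn : 2 ≤ n) :
    t (maxBox n t) = n * (n - 1) / 2 :=
  (Finset.mem_filter.mp (ht.maxBox_mem_filter hn)).2

lemma jmax_eq (ht : IsStaircaseSYT n t) (hn : 2 ≤ n) : jmax n t = (maxBox n t).2 := by
  rw [jmax, ht.filter_apply_eq_max hn, Finset.sup_singleton]

lemma eq_maxBox_of_apply_eq (ht : IsStaircaseSYT n t) (hn : 2 ≤ n)
    (hp : t p = n * (n - 1) / 2) : p = maxBox n t :=
  ht.eq_of_apply_eq (ht.maxBox_mem hn) (hp.trans (ht.apply_maxBox hn).symm)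

lemma maxBox_fst_add_snd (ht : IsStaircaseSYT n t) (hn : 2 ≤ n) :
    (maxBox n t).1 + (maxBox n t).2 = n := by
  obtain ⟨h1, h2, hsum⟩ := mem_staircase.mp (ht.maxBox_mem hn)
  by_contra hne
  have hbelow : ((maxBox n t).1 + 1, (maxBox n t).2) ∈ staircase n :=
    mem_staircase.mpr ⟨by omega, h2, by omega⟩
  have hlt := ht.apply_lt_of_le_of_ne (p := maxBox n t) hbelow
    (Prod.le_def.mpr ⟨by omega, le_rfl⟩) (fun h => by simpa using congrArg Prod.fst h)
  have := ht.le_max hbelow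
  rw [ht.apply_maxBox hn] at hlt
  omega

lemma jmax_eq_iff (ht : IsStaircaseSYT n t) (hn : 2 ≤ n) {k : ℕ} :
    jmax n t = k ↔ t (n - k, k) = n * (n - 1) / 2 := by
  rw [ht.jmax_eq hn]
  constructor
  · intro hk
    have hsum := ht.maxBox_fst_add_snd hn
    rw [← ht.apply_maxBox hn]
    congr 1
    exact Prod.ext (by omega) hk.symm
  · intro hval
    rw [← ht.eq_maxBox_of_apply_eq hn hval]

end IsStaircaseSYT

lemma evacStep_le (t : ℕ × ℕ → ℕ) (p : ℕ × ℕ) : evacStep t p ≤ p := by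
  unfold evacStep
  split
  · exact Prod.le_def.mpr ⟨Nat.sub_le _ _, le_rfl⟩
  · exact Prod.le_def.mpr ⟨le_rfl, Nat.sub_le _ _⟩

lemma apply_evacStep (t : ℕ × ℕ → ℕ) (p : ℕ × ℕ) :
    t (evacStep t p) = max (t (p.1 - 1, p.2)) (t (p.1, p.2 - 1)) := by
  unfold evacStep
  split <;> omega

lemma evacStep_fst_add_snd (t : ℕ × ℕ → ℕ) (h1 : 1 ≤ p.1) (h2 : 1 ≤ p.2) :
    (evacStep t p).1 + (evacStep t p).2 + 1 = p.1 + p.2 := by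
  unfold evacStep
  split <;> simp only <;> omega

namespace IsStaircaseSYT

lemma evacStep_mem (ht : IsStaircaseSYT n t) (hp : p ∈ staircase n) (h3 : 3 ≤ p.1 + p.2) :
    evacStep t p ∈ staircase n := by
  obtain ⟨h1, h2, hsum⟩ := mem_staircase.mp hp
  apply ht.mem_of_pos
  rw [apply_evacStep t p]
  by_cases h : 2 ≤ p.1
  · exact lt_max_of_lt_left (ht.pos (mem_staircase.mpr ⟨by omega, h2, by omega⟩))
  · exact lt_max_of_lt_right (ht.pos (mem_staircase.mpr ⟨h1, by omega, by omega⟩))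

/-- Why sliding along the evacuation path keeps rows and columns increasing. -/
lemma apply_lt_apply_evacStep (ht : IsStaircaseSYT n t) {c : ℕ × ℕ} (hc : c ∈ staircase n)
    (hp : p ∈ staircase n) (hle : p ≤ c) (hne : p ≠ c) (hne' : p ≠ evacStep t c) :
    t p < t (evacStep t c) := by
  obtain ⟨hp1, hp2, -⟩ := mem_staircase.mp hp
  obtain ⟨-, -, hc⟩ := mem_staircase.mp hc
  obtain ⟨h1, h2⟩ := Prod.le_def.mp hle
  have hle' : t p ≤ t (evacStep t c) := by
    rw [apply_evacStep t c]
    by_cases h : p.1 < c.1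
    · exact le_max_of_le_left (ht.apply_le_of_le
        (mem_staircase.mpr ⟨by omega, by omega, by omega⟩) (Prod.le_def.mpr ⟨by omega, h2⟩))
    · have : p.2 < c.2 := by
        by_contra
        exact hne (Prod.ext (by omega) (by omega))
      exact le_max_of_le_right (ht.apply_le_of_le
        (mem_staircase.mpr ⟨by omega, by omega, by omega⟩) (Prod.le_def.mpr ⟨h1, by omega⟩))
  exact hle'.lt_of_ne fun h => hne' (ht.eq_of_apply_eq hp h.symm).symm

end IsStaircaseSYT

/-- The box `c_{m+1}` of the evacuation path: indexed from `0`, unlike in `schutzenberger`. -/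
def evacPath (n : ℕ) (t : ℕ × ℕ → ℕ) (m : ℕ) : ℕ × ℕ :=
  (evacStep t)^[m] (maxBox n t)

lemma evacPath_succ (m : ℕ) : evacPath n t (m + 1) = evacStep t (evacPath n t m) :=
  Function.iterate_succ_apply' _ _ _

namespace IsStaircaseSYT

lemma evacPath_spec (ht : IsStaircaseSYT n t) (hn : 2 ≤ n) (m : ℕ) (hm : m < n) :
    (evacPath n t m).1 + (evacPath n t m).2 + m = n ∧
      (m + 2 ≤ n → evacPath n t m ∈ staircase n) := by
  induction m with
  | zero => exact ⟨ht.maxBox_fst_add_snd hn, fun _ => ht.maxBox_mem hn⟩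
  | succ m ih =>
    obtain ⟨hsum, hmem⟩ := ih (by omega)
    have hc := hmem (by omega)
    obtain ⟨h1, h2, -⟩ := mem_staircase.mp hc
    have hstep := evacStep_fst_add_snd t h1 h2
    rw [evacPath_succ]
    exact ⟨by omega, fun _ => ht.evacStep_mem hc (by omega)⟩

lemma evacPath_fst_add_snd (ht : IsStaircaseSYT n t) (hn : 2 ≤ n) {m : ℕ} (hm : m < n) :
    (evacPath n t m).1 + (evacPath n t m).2 + m = n :=
  (ht.evacPath_spec hn m hm).1

lemma evacPath_mem (ht : IsStaircaseSYT n t) {m : ℕ} (hm : m + 2 ≤ n) :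
    evacPath n t m ∈ staircase n :=
  (ht.evacPath_spec (by omega) m (by omega)).2 hm

lemma evacPath_last_notMem (ht : IsStaircaseSYT n t) (hn : 2 ≤ n) :
    evacPath n t (n - 1) ∉ staircase n := by
  have := ht.evacPath_fst_add_snd hn (m := n - 1) (by omega)
  rw [mem_staircase]
  omega

lemma evacPath_succ_ne (ht : IsStaircaseSYT n t) (hq : q ∈ staircase n)
    (hoff : ∀ m < n - 1, evacPath n t m ≠ q) {m : ℕ} (hm : m < n - 1) :
    evacPath n t (m + 1) ≠ q := by
  rintro rfl
  by_cases h : m + 1 < n - 1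
  · exact hoff _ h rfl
  · rw [show m + 1 = n - 1 by omega] at hq
    exact ht.evacPath_last_notMem (by omega) hq

lemma strictAntiOn_apply_evacPath (ht : IsStaircaseSYT n t) (hn : 2 ≤ n) :
    StrictAntiOn (fun m => t (evacPath n t m)) (Set.Iic (n - 1)) := by
  refine strictAntiOn_Iic_of_succ_lt fun m hm => ?_
  have hsum := ht.evacPath_fst_add_snd hn (m := m + 1) (by omega)
  rw [Order.succ_eq_add_one]
  rw [evacPath_succ] at hsum ⊢
  refine ht.apply_lt_of_le_of_ne (ht.evacPath_mem (by omega)) (evacStep_le t _) fun h => ?_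
  have := ht.evacPath_fst_add_snd hn (m := m) (by omega)
  rw [h] at hsum
  omega

lemma apply_evacPath_lt_max (ht : IsStaircaseSYT n t) {m : ℕ} (hm : m + 1 ≤ n - 1) :
    t (evacPath n t (m + 1)) < n * (n - 1) / 2 := by
  have hlt := ht.strictAntiOn_apply_evacPath (by omega) (a := 0) (b := m + 1)
    (by simp) (by simpa using hm) (by omega)
  exact hlt.trans_le (ht.le_max (ht.evacPath_mem (by omega)))

end IsStaircaseSYT

lemma schutzenberger_apply_of_notMem_evacPath (hp : p ∈ staircase n)
    (hoff : ∀ m < n - 1, evacPath n t m ≠ p) : schutzenberger n t p = t p + 1 := by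
  have hoff' : ¬ ∃ m < n - 1, (evacStep t)^[m] (maxBox n t) = p :=
    fun ⟨m, hm, h⟩ => hoff m hm h
  unfold schutzenberger
  rw [if_neg hoff', if_pos hp]

lemma IsStaircaseSYT.schutzenberger_apply_evacPath (ht : IsStaircaseSYT n t) {m : ℕ}
    (hm : m < n - 1) :
    schutzenberger n t (evacPath n t m) = t (evacPath n t (m + 1)) + 1 := by
  unfold schutzenberger
  rw [if_pos ⟨m, hm, rfl⟩, if_pos (ht.evacPath_mem (by omega)), evacPath_succ]

lemma schutzenberger_pos (hp : p ∈ staircase n) : 0 < schutzenberger n t p := by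
  unfold schutzenberger
  rw [if_pos hp]
  omega

namespace IsStaircaseSYT

lemma schutzenberger_eq_zero (ht : IsStaircaseSYT n t) (hp : p ∉ staircase n) :
    schutzenberger n t p = 0 := by
  have hoff : ¬ ∃ m < n - 1, (evacStep t)^[m] (maxBox n t) = p := by
    rintro ⟨m, hm, rfl⟩
    exact hp (ht.evacPath_mem (m := m) (by omega))
  unfold schutzenberger
  rw [if_neg hoff, if_neg hp, ht.eq_zero hp]

lemma schutzenberger_le_max (ht : IsStaircaseSYT n t) (hn : 2 ≤ n) (hp : p ∈ staircase n) :
    schutzenberger n t p ≤ n * (n - 1) / 2 := by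
  by_cases hon : ∃ m < n - 1, evacPath n t m = p
  · obtain ⟨m, hm, rfl⟩ := hon
    rw [ht.schutzenberger_apply_evacPath hm]
    have := ht.apply_evacPath_lt_max (m := m) (by omega)
    omega
  · push Not at hon
    rw [schutzenberger_apply_of_notMem_evacPath hp hon]
    have hne : p ≠ maxBox n t := fun h => hon 0 (by omega) h.symm
    have := (ht.le_max hp).lt_of_ne fun h => hne (ht.eq_maxBox_of_apply_eq hn h)
    omega

lemma schutzenberger_evacPath_ne (ht : IsStaircaseSYT n t) {m : ℕ} (hm : m < n - 1)
    (hq : q ∈ staircase n) (hoff : ∀ j < n - 1, evacPath n t j ≠ q) :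
    schutzenberger n t (evacPath n t m) ≠ schutzenberger n t q := by
  rw [ht.schutzenberger_apply_evacPath hm, schutzenberger_apply_of_notMem_evacPath hq hoff]
  intro h
  exact ht.evacPath_succ_ne hq hoff hm (ht.eq_of_apply_eq hq (by omega))

lemma injOn_schutzenberger (ht : IsStaircaseSYT n t) (hn : 2 ≤ n) :
    Set.InjOn (schutzenberger n t) (staircase n) := by
  intro p hp q hq hpq
  by_cases hpon : ∃ m < n - 1, evacPath n t m = p <;>
    by_cases hqon : ∃ m < n - 1, evacPath n t m = q
  · obtain ⟨j, hj, rfl⟩ := hpon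
    obtain ⟨m, hm, rfl⟩ := hqon
    rw [ht.schutzenberger_apply_evacPath hj, ht.schutzenberger_apply_evacPath hm] at hpq
    have : j + 1 = m + 1 := (ht.strictAntiOn_apply_evacPath hn).injOn
      (by simp only [Set.mem_Iic]; omega) (by simp only [Set.mem_Iic]; omega) (by simpa using hpq)
    rw [show j = m by omega]
  · push Not at hqon
    obtain ⟨j, hj, rfl⟩ := hpon
    exact absurd hpq (ht.schutzenberger_evacPath_ne hj hq hqon)
  · push Not at hpon
    obtain ⟨m, hm, rfl⟩ := hqon
    exact absurd hpq.symm (ht.schutzenberger_evacPath_ne hm hp hpon)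
  · push Not at hpon hqon
    rw [schutzenberger_apply_of_notMem_evacPath hp hpon,
      schutzenberger_apply_of_notMem_evacPath hq hqon] at hpq
    exact ht.2.2.1 hp hq (by omega)

lemma exists_schutzenberger_eq (ht : IsStaircaseSYT n t) (hn : 2 ≤ n) {v : ℕ} (hv1 : 1 ≤ v)
    (hv2 : v ≤ n * (n - 1) / 2) : ∃ p ∈ staircase n, schutzenberger n t p = v := by
  rcases Nat.lt_or_ge v 2 with hv | hv
  · refine ⟨evacPath n t (n - 2), ht.evacPath_mem (by omega), ?_⟩
    rw [ht.schutzenberger_apply_evacPath (by omega), show n - 2 + 1 = n - 1 by omega,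
      ht.eq_zero (ht.evacPath_last_notMem hn)]
    omega
  obtain ⟨q, hq, hqv⟩ := ht.2.2.2.1 (v - 1) (by omega) (by omega)
  by_cases hon : ∃ m < n - 1, evacPath n t m = q
  · obtain ⟨_ | m, hm, rfl⟩ := hon
    · have : t (evacPath n t 0) = n * (n - 1) / 2 := ht.apply_maxBox hn
      omega
    · refine ⟨evacPath n t m, ht.evacPath_mem (by omega), ?_⟩
      rw [ht.schutzenberger_apply_evacPath (by omega), hqv]
      omega
  · push Not at hon
    exact ⟨q, hq, by rw [schutzenberger_apply_of_notMem_evacPath hq hon, hqv]; omega⟩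

lemma schutzenberger_lt_of_le_of_ne (ht : IsStaircaseSYT n t) (hn : 2 ≤ n)
    (hp : p ∈ staircase n) (hq : q ∈ staircase n) (hle : p ≤ q) (hne : p ≠ q) :
    schutzenberger n t p < schutzenberger n t q := by
  obtain ⟨h1, h2⟩ := Prod.le_def.mp hle
  have hsum : p.1 + p.2 < q.1 + q.2 := by
    by_contra
    exact hne (Prod.ext (by omega) (by omega))
  by_cases hqon : ∃ m < n - 1, evacPath n t m = q
  · obtain ⟨m, hm, rfl⟩ := hqon
    rw [ht.schutzenberger_apply_evacPath hm]
    by_cases hpon : ∃ j < n - 1, evacPath n t j = p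
    · obtain ⟨j, hj, rfl⟩ := hpon
      rw [ht.schutzenberger_apply_evacPath hj]
      have := ht.evacPath_fst_add_snd hn (m := j) (by omega)
      have := ht.evacPath_fst_add_snd hn (m := m) (by omega)
      have := ht.strictAntiOn_apply_evacPath hn (a := m + 1) (b := j + 1)
        (by simp only [Set.mem_Iic]; omega) (by simp only [Set.mem_Iic]; omega) (by omega)
      simp only at this
      omega
    · push Not at hpon
      rw [schutzenberger_apply_of_notMem_evacPath hp hpon, evacPath_succ]
      have hne' := ht.evacPath_succ_ne hp hpon hm
      rw [evacPath_succ] at hne'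
      have := ht.apply_lt_apply_evacStep hq hp hle hne hne'.symm
      omega
  · push Not at hqon
    rw [schutzenberger_apply_of_notMem_evacPath hq hqon]
    by_cases hpon : ∃ j < n - 1, evacPath n t j = p
    · obtain ⟨j, hj, rfl⟩ := hpon
      rw [ht.schutzenberger_apply_evacPath hj]
      have hstep : evacPath n t (j + 1) ≤ evacPath n t j := by
        rw [evacPath_succ]
        exact evacStep_le t _
      have := ht.apply_lt_of_le_of_ne hq (hstep.trans hle) (ht.evacPath_succ_ne hq hqon hj)
      omega
    · push Not at hpon
      rw [schutzenberger_apply_of_notMem_evacPath hp hpon]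
      have := ht.apply_lt_of_le_of_ne hq hle hne
      omega

end IsStaircaseSYT

theorem isStaircaseSYT_schutzenberger (ht : IsStaircaseSYT n t) (hn : 2 ≤ n) :
    IsStaircaseSYT n (schutzenberger n t) :=
  ⟨fun _ hp => ht.schutzenberger_eq_zero hp,
    fun _ hp => ⟨schutzenberger_pos hp, ht.schutzenberger_le_max hn hp⟩,
    ht.injOn_schutzenberger hn,
    fun _ hv1 hv2 => ht.exists_schutzenberger_eq hn hv1 hv2,
    fun _ hp _ hq h1 h2 hne =>
      ht.schutzenberger_lt_of_le_of_ne hn hp hq (Prod.le_def.mpr ⟨h1, h2⟩) hne⟩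

theorem isStaircaseSYT_iterate_schutzenberger (ht : IsStaircaseSYT n t) (hn : 2 ≤ n) (r : ℕ) :
    IsStaircaseSYT n ((schutzenberger n)^[r] t) := by
  induction r with
  | zero => exact ht
  | succ r ih =>
    rw [Function.iterate_succ_apply']
    exact isStaircaseSYT_schutzenberger ih hn

lemma IsStaircaseSYT.schutzenberger_apply_corner (ht : IsStaircaseSYT n t) (hn : 2 ≤ n)
    {k : ℕ} (hk1 : 1 ≤ k) (hk2 : k ≤ n - 1) (hlt : t (n - k, k) < n * (n - 1) / 2) :
    schutzenberger n t (n - k, k) = t (n - k, k) + 1 := by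
  refine schutzenberger_apply_of_notMem_evacPath (corner_mem_staircase hk1 hk2) ?_
  rintro (_ | m) hm h
  · have : t (evacPath n t 0) = n * (n - 1) / 2 := ht.apply_maxBox hn
    rw [h] at this
    omega
  · have := ht.evacPath_fst_add_snd hn (m := m + 1) (by omega)
    rw [h] at this
    omega

lemma IsStaircaseSYT.iterate_schutzenberger_apply_corner (ht : IsStaircaseSYT n t)
    (hn : 2 ≤ n) {k : ℕ} (hk1 : 1 ≤ k) (hk2 : k ≤ n - 1) {r : ℕ}
    (hr : r ≤ n * (n - 1) / 2 - t (n - k, k)) :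
    (schutzenberger n)^[r] t (n - k, k) = t (n - k, k) + r := by
  induction r with
  | zero => rfl
  | succ r ih =>
    have hprev := ih (by omega)
    have := ht.le_max (corner_mem_staircase hk1 hk2)
    rw [Function.iterate_succ_apply',
      (isStaircaseSYT_iterate_schutzenberger ht hn r).schutzenberger_apply_corner hn hk1 hk2
        (by omega), hprev, add_assoc]

lemma IsStaircaseSYT.isGreatest_EGword_eq (ht : IsStaircaseSYT n t) (hn : 2 ≤ n) {k : ℕ}
    (hk1 : 1 ≤ k) (hk2 : k ≤ n - 1) :
    IsGreatest {j : ℕ | 1 ≤ j ∧ j ≤ n * (n - 1) / 2 ∧ EGword n t j = k}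
      (t (n - k, k)) := by
  have hcorner := corner_mem_staircase hk1 hk2
  have hEG : ∀ j ≤ n * (n - 1) / 2, t (n - k, k) ≤ j →
      (EGword n t j = k ↔ t (n - k, k) + (n * (n - 1) / 2 - j) = n * (n - 1) / 2) := by
    intro j hj htj
    rw [EGword, (isStaircaseSYT_iterate_schutzenberger ht hn _).jmax_eq_iff hn,
      ht.iterate_schutzenberger_apply_corner hn hk1 hk2 (by omega)]
  refine ⟨⟨ht.pos hcorner, ht.le_max hcorner, ?_⟩, fun j ⟨_, hj, hjk⟩ => ?_⟩
  · exact (hEG _ (ht.le_max hcorner) le_rfl).mpr (by have := ht.le_max hcorner; omega)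
  · by_contra! hlt
    have := (hEG j hj hlt.le).mp hjk
    omega

/-- for a staircase standard Young tableau `t` and its Edelman–Greene
sorting network `s = EG(t)`, the last occurrence of the letter `k` in `s` is at
position `t_{n-k,k}`, i.e. `last_s(k) = t_{n-k,k}` for `1 ≤ k ≤ n-1`; consequently the
ordering permutations coincide: the relative order of `(last_s(1),…,last_s(n-1))`
equals that of the corner entries `(t_{n-1,1},…,t_{1,n-1})`, i.e. `π_s = σ_t`. -/
theorem edelmanGreene_last_eq_corner (n : ℕ) (hn : 2 ≤ n)
    (t : ℕ × ℕ → ℕ) (ht : IsStaircaseSYT n t) :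
    (∀ k, 1 ≤ k → k ≤ n - 1 →
      IsGreatest {j : ℕ | 1 ≤ j ∧ j ≤ n * (n - 1) / 2 ∧ EGword n t j = k}
        (t (n - k, k))) ∧
    (∀ k l, 1 ≤ k → k ≤ n - 1 → 1 ≤ l → l ≤ n - 1 →
      (sSup {j : ℕ | 1 ≤ j ∧ j ≤ n * (n - 1) / 2 ∧ EGword n t j = k} <
          sSup {j : ℕ | 1 ≤ j ∧ j ≤ n * (n - 1) / 2 ∧ EGword n t j = l} ↔
        t (n - k, k) < t (n - l, l))) := by
  refine ⟨fun k hk1 hk2 => ht.isGreatest_EGword_eq hn hk1 hk2, fun k l hk1 hk2 hl1 hl2 => ?_⟩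
  rw [(ht.isGreatest_EGword_eq hn hk1 hk2).csSup_eq,
    (ht.isGreatest_EGword_eq hn hl1 hl2).csSup_eq]
end

section
/- The number of standard Young tableaux of staircase shape $\delta_n = (n-1, n-2, \ldots, 1)$ equals $N! / (1^{n-1} \cdot 3^{n-2} \cdot 5^{n-3} \cdots (2n-3)^1)$ where $N = n(n-1)/2$. -/
open Finset Function
open scoped Nat

def IsSYT (S : Finset (ℕ × ℕ)) (t : ℕ × ℕ → ℕ) : Prop :=
  (∀ p ∉ S, t p = 0) ∧ Set.BijOn t S (Set.Icc 1 #S) ∧ StrictMonoOn t S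

def corners (S : Finset (ℕ × ℕ)) : Finset (ℕ × ℕ) := {p ∈ S | ∀ q ∈ S, p ≤ q → q = p}

lemma mem_corners {S : Finset (ℕ × ℕ)} {p : ℕ × ℕ} :
    p ∈ corners S ↔ p ∈ S ∧ ∀ q ∈ S, p ≤ q → q = p :=
  mem_filter

namespace IsSYT

variable {S : Finset (ℕ × ℕ)} {t : ℕ × ℕ → ℕ} {p : ℕ × ℕ}

instance (S : Finset (ℕ × ℕ)) : Finite {t // IsSYT S t} := by
  refine Finite.of_injective (fun t (q : S) => (⟨t.1 q, ?_⟩ : Fin (#S + 1))) ?_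
  · exact Nat.lt_succ_of_le (t.2.2.1.mapsTo q.2).2
  · rintro ⟨t, ht⟩ ⟨s, hs⟩ h
    ext q : 2
    by_cases hq : q ∈ S
    · exact congrArg Fin.val (congrFun h ⟨q, hq⟩)
    · exact (ht.1 q hq).trans (hs.1 q hq).symm

lemma mem_corners_of_apply_eq_card (ht : IsSYT S t) (hp : p ∈ S) (htp : t p = #S) :
    p ∈ corners S := by
  refine mem_corners.2 ⟨hp, fun q hq hpq => ?_⟩
  by_contra hne
  have := ht.2.2 (mem_coe.2 hp) (mem_coe.2 hq) (lt_of_le_of_ne hpq (Ne.symm hne))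
  have := (ht.2.1.mapsTo hq).2
  omega

lemma erase (ht : IsSYT S t) (hp : p ∈ S) (htp : t p = #S) :
    IsSYT (S.erase p) (update t p 0) := by
  obtain ⟨hzero, hbij, hmono⟩ := ht
  have hEq : Set.EqOn t (update t p 0) (S.erase p) := fun q hq =>
    (update_of_ne (ne_of_mem_erase hq) _ _).symm
  refine ⟨fun q hq => ?_, ?_, (hmono.mono (by simp)).congr hEq⟩
  · by_cases hqp : q = p
    · simp [hqp]
    · rw [update_of_ne hqp, hzero q fun h => hq (mem_erase.2 ⟨hqp, h⟩)]
  · have hS : 0 < #S := card_pos.2 ⟨p, hp⟩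
    convert (hbij.sdiff_singleton hp).congr (by simpa using hEq) using 1
    · simp
    · ext v
      simp only [card_erase_of_mem hp, htp, Set.mem_Icc, Set.mem_sdiff, Set.mem_singleton_iff]
      omega

lemma of_erase (hp : p ∈ corners S) (ht : IsSYT (S.erase p) t) : IsSYT S (update t p #S) := by
  obtain ⟨hpS, hmax⟩ := mem_corners.1 hp
  obtain ⟨hzero, hbij, hmono⟩ := ht
  have hS : 0 < #S := card_pos.2 ⟨p, hpS⟩
  have hlt : ∀ q ∈ S.erase p, t q < #S := fun q hq => by
    have := (hbij.mapsTo hq).2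
    rw [card_erase_of_mem hpS] at this
    omega
  have hEq : Set.EqOn t (update t p #S) (S.erase p) := fun q hq =>
    (update_of_ne (ne_of_mem_erase hq) _ _).symm
  refine ⟨fun q hq => ?_, ?_, fun q hq r hr hqr => ?_⟩
  · have hqp : q ≠ p := by rintro rfl; exact hq hpS
    rw [update_of_ne hqp, hzero q fun h => hq (mem_of_mem_erase h)]
  · have := (hbij.congr hEq).insert (a := p) (by simp [card_erase_of_mem hpS])
    convert this using 1
    · rw [← coe_insert, insert_erase hpS]
    · ext v
      simp only [update_self, card_erase_of_mem hpS, Set.mem_Icc, Set.mem_insert_iff]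
      omega
  · by_cases hrp : r = p
    · subst hrp
      rw [update_self, update_of_ne hqr.ne]
      exact hlt q (mem_erase.2 ⟨hqr.ne, hq⟩)
    · have hqp : q ≠ p := by
        rintro rfl
        exact hrp (hmax r hr hqr.le)
      rw [update_of_ne hqp, update_of_ne hrp]
      exact hmono (mem_erase.2 ⟨hqp, hq⟩) (mem_erase.2 ⟨hrp, hr⟩) hqr

end IsSYT

def eraseCornerEquiv {S : Finset (ℕ × ℕ)} {p : ℕ × ℕ} (hp : p ∈ corners S) :
    {t // IsSYT S t ∧ t p = #S} ≃ {t // IsSYT (S.erase p) t} where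
  toFun t := ⟨update t.1 p 0, t.2.1.erase (mem_corners.1 hp).1 t.2.2⟩
  invFun t := ⟨update t.1 p #S, t.2.of_erase hp, update_self ..⟩
  left_inv t := by
    ext1
    simp only [update_idem, ← t.2.2, update_eq_self]
  right_inv t := by
    ext1
    simp only [update_idem, ← t.2.1 p (notMem_erase p S), update_eq_self]

theorem card_isSYT_eq_sum_corners {S : Finset (ℕ × ℕ)} (hS : S.Nonempty) :
    Nat.card {t // IsSYT S t} = ∑ p ∈ corners S, Nat.card {t // IsSYT (S.erase p) t} := by
  let forget : (Σ p : corners S, {t // IsSYT S t ∧ t p = #S}) → {t // IsSYT S t} :=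
    fun x => ⟨x.2.1, x.2.2.1⟩
  have hforget : Bijective forget := by
    refine ⟨?_, fun t => ?_⟩
    · rintro ⟨⟨p, hp⟩, t, ht, htp⟩ ⟨⟨q, hq⟩, s, hs, hsq⟩ h
      obtain rfl : t = s := congrArg Subtype.val h
      obtain rfl : p = q :=
        ht.2.1.injOn (mem_corners.1 hp).1 (mem_corners.1 hq).1 (htp.trans hsq.symm)
      rfl
    · obtain ⟨p, hp, htp⟩ := t.2.2.1.surjOn (show #S ∈ Set.Icc 1 #S from ⟨card_pos.2 hS, le_rfl⟩)
      exact ⟨⟨⟨p, t.2.mem_corners_of_apply_eq_card hp htp⟩, t.1, t.2, htp⟩, rfl⟩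
  rw [← Nat.card_eq_of_bijective forget hforget,
    Nat.card_congr (Equiv.sigmaCongrRight fun p => eraseCornerEquiv p.2), Nat.card_sigma,
    sum_coe_sort (corners S) fun p => Nat.card {t // IsSYT (S.erase p) t}]

lemma card_isSYT_empty : Nat.card {t // IsSYT ∅ t} = 1 := by
  refine Nat.card_eq_one_iff_exists.2
    ⟨⟨0, fun _ _ => rfl, by simp, by simp [StrictMonoOn]⟩, fun t => ?_⟩
  ext1
  exact funext fun p => t.2.1 p (notMem_empty p)

section YoungDiagram

variable {m : ℕ}

/-- Rows and columns are numbered from `1`, as in `staircase`. -/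
def youngCells (μ : Fin m → ℕ) : Finset (ℕ × ℕ) :=
  univ.biUnion fun i : Fin m => {(i : ℕ) + 1} ×ˢ Icc 1 (μ i)

lemma mem_youngCells {μ : Fin m → ℕ} {p : ℕ × ℕ} :
    p ∈ youngCells μ ↔ ∃ i : Fin m, p.1 = i + 1 ∧ 1 ≤ p.2 ∧ p.2 ≤ μ i := by
  simp only [youngCells, mem_biUnion, mem_univ, true_and, mem_product, mem_singleton, mem_Icc]

lemma card_youngCells (μ : Fin m → ℕ) : #(youngCells μ) = ∑ i, μ i := by
  rw [youngCells, card_biUnion]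
  · simp
  · intro i _ j _ hij
    simp only [disjoint_left, mem_product, mem_singleton]
    exact fun p hi hj => hij (Fin.ext (by omega))

def IsCornerRow (μ : Fin m → ℕ) (i : Fin m) : Prop :=
  μ i ≠ 0 ∧ ∀ j, i < j → μ j < μ i

instance (μ : Fin m → ℕ) : DecidablePred (IsCornerRow μ) :=
  fun _ => inferInstanceAs (Decidable (_ ∧ _))

lemma corners_youngCells (μ : Fin m → ℕ) :
    corners (youngCells μ)
      = (univ.filter (IsCornerRow μ)).image fun i : Fin m => ((i : ℕ) + 1, μ i) := by
  ext p
  simp only [mem_corners, mem_image, mem_filter, mem_univ, true_and]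
  constructor
  · rintro ⟨hp, hmax⟩
    obtain ⟨i, hi, h1, h2⟩ := mem_youngCells.1 hp
    have hend : ((i : ℕ) + 1, μ i) = p :=
      hmax _ (mem_youngCells.2 ⟨i, rfl, by omega, le_rfl⟩) (Prod.mk_le_mk.2 ⟨hi.le, h2⟩)
    refine ⟨i, ⟨by omega, fun j hij => ?_⟩, hend⟩
    by_contra! hle
    have hij' : (i : ℕ) < j := hij
    have := hmax ((j : ℕ) + 1, μ i) (mem_youngCells.2 ⟨j, rfl, by omega, hle⟩)
      (Prod.mk_le_mk.2 ⟨by omega, by omega⟩)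
    rw [← hend, Prod.mk.injEq] at this
    omega
  · rintro ⟨i, ⟨hi0, hlt⟩, rfl⟩
    refine ⟨mem_youngCells.2 ⟨i, rfl, by omega, le_rfl⟩, ?_⟩
    rintro ⟨a, b⟩ hq hpq
    obtain ⟨j, rfl, -, hbj⟩ := mem_youngCells.1 hq
    obtain ⟨hij, hb⟩ := Prod.mk_le_mk.1 hpq
    obtain rfl : i = j := by
      by_contra hne
      have := hlt j (lt_of_le_of_ne (Fin.le_iff_val_le_val.2 (by omega)) hne)
      omega
    exact Prod.ext rfl (le_antisymm hbj hb)

lemma youngCells_erase {μ : Fin m → ℕ} {i : Fin m} (hi : μ i ≠ 0) :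
    (youngCells μ).erase ((i : ℕ) + 1, μ i) = youngCells (update μ i (μ i - 1)) := by
  ext ⟨a, b⟩
  simp only [mem_erase, mem_youngCells, ne_eq, Prod.mk.injEq]
  constructor
  · rintro ⟨hne, j, rfl, hb, hbj⟩
    refine ⟨j, rfl, hb, ?_⟩
    rcases eq_or_ne j i with rfl | hji
    · rw [update_self]
      omega
    · rwa [update_of_ne hji]
  · rintro ⟨j, rfl, hb, hbj⟩
    rcases eq_or_ne j i with rfl | hji
    · rw [update_self] at hbj
      exact ⟨by omega, j, rfl, hb, by omega⟩
    · rw [update_of_ne hji] at hbj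
      exact ⟨fun h => hji (Fin.ext (by omega)), j, rfl, hb, hbj⟩

theorem card_isSYT_youngCells_eq_sum {μ : Fin m → ℕ} (hμ : (youngCells μ).Nonempty) :
    Nat.card {t // IsSYT (youngCells μ) t} =
      ∑ i with IsCornerRow μ i, Nat.card {t // IsSYT (youngCells (update μ i (μ i - 1))) t} := by
  rw [card_isSYT_eq_sum_corners hμ, corners_youngCells, sum_image fun i _ j _ h => Fin.ext (by
    simpa using congrArg Prod.fst h)]
  exact sum_congr rfl fun i hi => by rw [youngCells_erase (mem_filter.1 hi).2.1]

end YoungDiagram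

/-- `1 / a!`, extended by zero to negative `a` as `1 / Γ(a + 1)` is. -/
def invFactorial : ℤ → ℚ
  | (k : ℕ) => (k ! : ℚ)⁻¹
  | Int.negSucc _ => 0

lemma invFactorial_natCast (k : ℕ) : invFactorial k = (k ! : ℚ)⁻¹ := rfl

lemma invFactorial_of_neg {a : ℤ} (ha : a < 0) : invFactorial a = 0 := by
  obtain ⟨k, rfl⟩ := Int.eq_negSucc_of_lt_zero ha
  rfl

lemma invFactorial_sub_one (a : ℤ) : invFactorial (a - 1) = a * invFactorial a := by
  rcases a with (_ | k) | k
  · rw [invFactorial_of_neg (by decide)]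
    simp
  · have : ((k + 1 : ℕ) : ℤ) - 1 = k := by omega
    simp only [Int.ofNat_eq_natCast, this, invFactorial, Nat.factorial_succ]
    push_cast
    field_simp
  · rw [invFactorial_of_neg (by omega), invFactorial_of_neg (Int.negSucc_lt_zero k), mul_zero]

section Aitken

variable {m : ℕ}

def aitkenMatrix (a : Fin m → ℤ) : Matrix (Fin m) (Fin m) ℚ :=
  .of fun i j => invFactorial (a i - i + j)

lemma prod_aitkenMatrix_update_perm (a : Fin m → ℤ) (σ : Equiv.Perm (Fin m)) (k : Fin m) :
    ∏ j, aitkenMatrix (update a (σ k) (a (σ k) - 1)) (σ j) j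
      = ((a (σ k) - σ k + k : ℤ) : ℚ) * ∏ j, aitkenMatrix a (σ j) j := by
  rw [← mul_prod_erase univ _ (mem_univ k), ← mul_prod_erase univ _ (mem_univ k), ← mul_assoc]
  congr 1
  · simp only [aitkenMatrix, Matrix.of_apply, update_self, ← invFactorial_sub_one]
    ring_nf
  · refine prod_congr rfl fun j hj => ?_
    have : σ j ≠ σ k := σ.injective.ne (ne_of_mem_erase hj)
    simp only [aitkenMatrix, Matrix.of_apply, update_of_ne this]

lemma sum_det_aitkenMatrix_update (a : Fin m → ℤ) :
    ∑ i, (aitkenMatrix (update a i (a i - 1))).det = (∑ i, a i) * (aitkenMatrix a).det := by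
  simp only [Matrix.det_apply', mul_sum]
  rw [sum_comm]
  refine sum_congr rfl fun σ _ => ?_
  have hsum : ∑ k, (a (σ k) - σ k + k) = ∑ i, a i := by
    rw [sum_add_distrib, sum_sub_distrib, Equiv.sum_comp σ a,
      Equiv.sum_comp σ fun i => ((i : ℕ) : ℤ)]
    ring
  rw [← Equiv.sum_comp σ, ← hsum]
  simp only [prod_aitkenMatrix_update_perm]
  push_cast
  rw [sum_mul]
  exact sum_congr rfl fun k _ => by ring

lemma det_aitkenMatrix_zero : (aitkenMatrix fun _ : Fin m => (0 : ℤ)).det = 1 := by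
  rw [Matrix.det_of_isUpperTriangular]
  · simp [aitkenMatrix, invFactorial]
  · intro i j hji
    exact invFactorial_of_neg (by simpa using hji)

lemma det_aitkenMatrix_of_sub_eq (a : Fin m → ℤ) {i j : Fin m} (hij : i ≠ j)
    (h : a i - i = a j - j) : (aitkenMatrix a).det = 0 :=
  Matrix.det_zero_of_row_eq hij (funext fun k => by simp only [aitkenMatrix, Matrix.of_apply, h])

lemma det_aitkenMatrix_of_add_lt_zero (a : Fin m → ℤ) {i : Fin m} (h : a i - i + (m - 1) < 0) :
    (aitkenMatrix a).det = 0 :=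
  Matrix.det_eq_zero_of_row_eq_zero i fun j => invFactorial_of_neg (by have := j.isLt; omega)

end Aitken

section Count

variable {m : ℕ} {μ : Fin m → ℕ} {i : Fin m}

lemma IsCornerRow.antitone_update (hμ : Antitone μ) (hi : IsCornerRow μ i) :
    Antitone (update μ i (μ i - 1)) := by
  intro a b hab
  have hμab := hμ hab
  simp only [update_apply]
  split_ifs with hb ha ha
  · rfl
  · subst hb
    omega
  · subst ha
    have := hi.2 b (lt_of_le_of_ne hab (Ne.symm hb))
    omega
  · exact hμab

lemma det_aitkenMatrix_update_of_not_isCornerRow (hμ : Antitone μ) (hi : ¬ IsCornerRow μ i) :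
    (aitkenMatrix (update (fun k => (μ k : ℤ)) i (μ i - 1))).det = 0 := by
  by_cases hlast : (i : ℕ) + 1 < m
  · let i' : Fin m := ⟨i + 1, hlast⟩
    have hii' : i < i' := Fin.lt_def.2 (Nat.lt_succ_self _)
    -- if row `i + 1` were shorter, row `i` would be a corner
    have heq : μ i' = μ i := by
      refine le_antisymm (hμ hii'.le) (not_lt.1 fun hlt => hi ⟨by omega, fun j hj => ?_⟩)
      exact (hμ (show i' ≤ j from Fin.le_def.2 (Fin.lt_def.1 hj))).trans_lt hlt
    refine det_aitkenMatrix_of_sub_eq _ hii'.ne ?_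
    simp only [update_self, update_of_ne hii'.ne', heq, i']
    push_cast
    ring
  · have hμi : μ i = 0 := by
      by_contra h
      refine hi ⟨h, fun j hj => ?_⟩
      have := Fin.lt_def.1 hj
      omega
    refine det_aitkenMatrix_of_add_lt_zero _ (i := i) ?_
    simp only [update_self, hμi]
    omega

theorem card_isSYT_youngCells (hμ : Antitone μ) :
    (Nat.card {t // IsSYT (youngCells μ) t} : ℚ)
      = (∑ i, μ i)! * (aitkenMatrix (fun k => (μ k : ℤ))).det := by
  induction hN : ∑ i, μ i generalizing μ with
  | zero =>
    obtain rfl : μ = 0 := funext fun i => sum_eq_zero_iff.1 hN i (mem_univ i)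
    have hempty : youngCells (0 : Fin m → ℕ) = ∅ := by
      rw [← card_eq_zero, card_youngCells, hN]
    rw [hempty, card_isSYT_empty]
    simpa using det_aitkenMatrix_zero.symm
  | succ N ih =>
    have hne : (youngCells μ).Nonempty := by
      rw [← card_pos, card_youngCells, hN]
      omega
    have hstep : ∀ i ∈ univ.filter (IsCornerRow μ),
        (Nat.card {t // IsSYT (youngCells (update μ i (μ i - 1))) t} : ℚ)
          = N ! * (aitkenMatrix (update (fun k => (μ k : ℤ)) i (μ i - 1))).det := by
      intro i hi
      have hi := (mem_filter.1 hi).2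
      have hμi := hi.1
      have hsum : ∑ k, update μ i (μ i - 1) k = N := by
        have := add_sum_erase univ μ (mem_univ i)
        rw [sum_update_of_mem (mem_univ i), sdiff_singleton_eq_erase]
        omega
      have hcast : (fun k => (update μ i (μ i - 1) k : ℤ))
          = update (fun k => (μ k : ℤ)) i (μ i - 1) := by
        ext k
        rcases eq_or_ne k i with rfl | hki
        · rw [update_self, update_self]
          omega
        · simp only [update_of_ne hki]
      rw [ih (hi.antitone_update hμ) hsum, hcast]
    rw [card_isSYT_youngCells_eq_sum hne, Nat.cast_sum, sum_congr rfl hstep, ← mul_sum,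
      sum_filter_of_ne fun i _ h => not_not.1 fun hi =>
        h (det_aitkenMatrix_update_of_not_isCornerRow hμ hi),
      sum_det_aitkenMatrix_update]
    rw [← Nat.cast_sum, hN]
    push_cast [Nat.factorial_succ]
    ring

end Count

section Staircase

open Matrix Polynomial

lemma factorial_mul_invFactorial_sub (n k : ℕ) :
    (n ! : ℚ) * invFactorial (n - k) = n.descFactorial k := by
  rcases le_or_gt k n with hkn | hnk
  · rw [← Nat.cast_sub hkn, invFactorial_natCast, ← Nat.factorial_mul_descFactorial hkn]
    push_cast
    field_simp
  · rw [invFactorial_of_neg (by omega), Nat.descFactorial_eq_zero_iff_lt.2 hnk]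
    simp

lemma det_vandermonde_two_mul_add_one (m : ℕ) :
    (vandermonde fun i : Fin m => (2 * i + 1 : ℚ)).det = ∏ j ∈ range m, ((2 * j)‼ : ℚ) := by
  rw [det_vandermonde, prod_comm' (t' := univ) (s' := fun j => Iio j) (by simp),
    ← Fin.prod_univ_eq_prod_range]
  refine prod_congr rfl fun j _ => ?_
  rw [Nat.doubleFactorial_eq_prod_even, ← prod_range_reflect, Nat.cast_prod, ← Nat.Iio_eq_range,
    ← Fin.map_valEmbedding_Iio, prod_map]
  refine prod_congr rfl fun i hi => ?_
  have hij : (i : ℕ) < j := Fin.lt_def.1 (mem_Iio.1 hi)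
  rw [Fin.valEmbedding_apply, show (j : ℕ) - 1 - i + 1 = j - i by omega, Nat.cast_mul,
    Nat.cast_sub hij.le]
  push_cast
  ring

theorem det_aitkenMatrix_staircase_mul (m : ℕ) :
    (aitkenMatrix fun i : Fin m => ((m - i : ℕ) : ℤ)).det * ∏ j ∈ range m, ((2 * j + 1)‼ : ℚ)
      = 1 := by
  set A := aitkenMatrix fun i : Fin m => ((m - i : ℕ) : ℤ)
  have hrev : ∀ i j : Fin m,
      A.submatrix Fin.revPerm Fin.revPerm i j = invFactorial ((2 * i + 1 : ℕ) - j) := by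
    intro i j
    simp only [A, aitkenMatrix, submatrix_apply, of_apply, Fin.revPerm_apply, Fin.val_rev]
    congr 1
    omega
  -- the rows of `A`, reversed and scaled, evaluate the monic polynomials `X (X - 1) ⋯ (X - j + 1)`
  have hvdm : (vandermonde fun i : Fin m => (2 * i + 1 : ℚ)).det
      = (∏ i : Fin m, ((2 * i + 1)! : ℚ)) * A.det := by
    rw [det_eval_matrixOfPolynomials_eq_det_vandermonde _ (fun j => descPochhammer ℚ j)
      (fun j => descPochhammer_natDegree ℚ j) (fun j => monic_descPochhammer ℚ j),
      ← det_submatrix_equiv_self Fin.revPerm A, ← det_mul_column]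
    congr 1
    ext i j
    rw [of_apply, of_apply, hrev, factorial_mul_invFactorial_sub,
      ← descPochhammer_eval_eq_descFactorial]
    push_cast
    rfl
  have hfac : ∏ j ∈ range m, ((2 * j + 1)! : ℚ)
      = (∏ j ∈ range m, ((2 * j + 1)‼ : ℚ)) * ∏ j ∈ range m, ((2 * j)‼ : ℚ) := by
    rw [← prod_mul_distrib]
    exact prod_congr rfl fun j _ => by rw [Nat.factorial_eq_mul_doubleFactorial, Nat.cast_mul]
  rw [det_vandermonde_two_mul_add_one, Fin.prod_univ_eq_prod_range (fun i => ((2 * i + 1)! : ℚ)),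
    hfac] at hvdm
  have hne : ∏ j ∈ range m, ((2 * j)‼ : ℚ) ≠ 0 :=
    prod_ne_zero_iff.2 fun j _ => by positivity
  apply mul_right_cancel₀ hne
  linear_combination hvdm.symm

end Staircase

lemma doubleFactorial_two_mul_add_one_eq_prod_Icc (m : ℕ) :
    (2 * m + 1)‼ = ∏ k ∈ Icc 1 (m + 1), (2 * k - 1) := by
  induction m with
  | zero => rfl
  | succ m ih =>
    rw [prod_Icc_succ_top (by omega), ← ih, show 2 * (m + 1) + 1 = 2 * m + 1 + 2 by ring,
      Nat.doubleFactorial_add_two, mul_comm]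
    congr 1

lemma prod_range_doubleFactorial_odd (m : ℕ) :
    ∏ j ∈ range m, (2 * j + 1)‼ = ∏ k ∈ Icc 1 m, (2 * k - 1) ^ (m + 1 - k) := by
  induction m with
  | zero => rfl
  | succ m ih =>
    have hexp : ∀ k ∈ Icc 1 (m + 1), (2 * k - 1) ^ (m + 1 + 1 - k)
        = (2 * k - 1) ^ (m + 1 - k) * (2 * k - 1) := fun k hk => by
      rw [← pow_succ]
      congr 1
      have := (mem_Icc.1 hk).2
      omega
    rw [prod_range_succ, ih, doubleFactorial_two_mul_add_one_eq_prod_Icc, prod_congr rfl hexp,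
      prod_mul_distrib, prod_Icc_succ_top (by omega) fun k => (2 * k - 1) ^ (m + 1 - k),
      Nat.sub_self, pow_zero, mul_one]

lemma staircase_eq_youngCells (n : ℕ) :
    staircase n = youngCells fun i : Fin (n - 1) => n - 1 - i := by
  ext ⟨a, b⟩
  simp only [staircase, mem_filter, mem_Icc, Prod.mk_le_mk, mem_youngCells]
  constructor
  · rintro ⟨⟨⟨ha, hb⟩, -, -⟩, hab⟩
    exact ⟨⟨a - 1, by omega⟩, by simp only; omega, hb, by simp only; omega⟩
  · rintro ⟨i, rfl, hb, hbi⟩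
    have := i.isLt
    omega

lemma card_staircase (n : ℕ) : #(staircase n) = n * (n - 1) / 2 := by
  rw [staircase_eq_youngCells, card_youngCells, ← sum_range_id,
    Fin.sum_univ_eq_sum_range (fun i => n - 1 - i)]
  rcases n with _ | k
  · rfl
  · rw [← sum_range_reflect (fun i => i), sum_range_succ, Nat.add_sub_cancel]
    simp

lemma isStaircaseSYT_iff {n : ℕ} {t : ℕ × ℕ → ℕ} :
    IsStaircaseSYT n t ↔ IsSYT (staircase n) t := by
  simp only [IsStaircaseSYT, IsSYT, Set.BijOn, Set.MapsTo, Set.SurjOn, StrictMonoOn,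
    Set.subset_def, Set.mem_image, Set.mem_Icc, mem_coe, card_staircase, lt_iff_le_and_ne,
    Prod.le_def, and_imp, and_assoc]

theorem card_staircase_SYT_general (n : ℕ) :
    Nat.card {t : ℕ × ℕ → ℕ // IsStaircaseSYT n t}
      = Nat.factorial (n * (n - 1) / 2)
        / ∏ k ∈ Finset.Icc 1 (n - 1), (2 * k - 1) ^ (n - k) := by
  have hrows : Antitone fun i : Fin (n - 1) => n - 1 - i := fun _ _ hij =>
    Nat.sub_le_sub_left (Fin.le_def.1 hij) _
  have hcount : (Nat.card {t // IsStaircaseSYT n t} : ℚ) * ∏ j ∈ range (n - 1), ((2 * j + 1)‼ : ℚ)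
      = (n * (n - 1) / 2)! := by
    simp only [isStaircaseSYT_iff]
    rw [staircase_eq_youngCells, card_isSYT_youngCells hrows, ← card_youngCells,
      ← staircase_eq_youngCells, card_staircase, mul_assoc, det_aitkenMatrix_staircase_mul,
      mul_one]
  have hprod : ∏ k ∈ Icc 1 (n - 1), (2 * k - 1) ^ (n - k) = ∏ j ∈ range (n - 1), (2 * j + 1)‼ := by
    rw [prod_range_doubleFactorial_odd]
    refine prod_congr rfl fun k hk => ?_
    have := mem_Icc.1 hk
    congr 1
    omega
  rw [hprod]
  refine (Nat.div_eq_of_eq_mul_left (by positivity) ?_).symm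
  exact_mod_cast hcount.symm

/-- the number of standard Young tableaux of staircase shape `δ_n`
equals `N! / (1^{n-1} ⋅ 3^{n-2} ⋯ (2n-3)^1)`, i.e.
`N! / ∏_{k=1}^{n-1} (2k-1)^{n-k}`, where `N = n(n-1)/2`. -/
theorem card_staircase_SYT (n : ℕ) (hn : 2 ≤ n) :
    Nat.card {t : ℕ × ℕ → ℕ // IsStaircaseSYT n t}
      = Nat.factorial (n * (n - 1) / 2)
        / ∏ k ∈ Finset.Icc 1 (n - 1), (2 * k - 1) ^ (n - k) :=
  card_staircase_SYT_general n
end
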